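/- Let a, b be unit vectors in ℂ² that are not orthogonal and not parallel (0 < |⟨a|b⟩| < 1). Then the three-qubit vector b⊗a⊗a + a⊗b⊗a + a⊗a⊗b (normalized) is NOT local-unitarily equivalent to the W state. Equivalently (contrapositive of Theorem 3's necessity): if the switch output state with each local factor pair (UᵢŨᵢ|φᵢ⟩, ŨᵢUᵢ|φᵢ⟩) is LU-equivalent to W, then ⟨φᵢ|(ŨᵢUᵢ)†(UᵢŨᵢ)|φᵢ⟩ = 0 for every i. -/

import Mathlib

/-!
Under local unitaries the reduced density matrix `ρ` of the first qubit is conjugated by a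
unitary, so `9 tr ρ² - 5 (tr ρ)²` is a local-unitary invariant, homogeneous of degree four in
the state. It vanishes on `W`, where `ρ = diag(2/3, 1/3)`, whereas for unit vectors `a, b` the
state `b⊗a⊗a + a⊗b⊗a + a⊗a⊗b` gives `108 s (2 + s)` with `s = |⟨a|b⟩|²`, which is
non-zero as soon as `⟨a|b⟩ ≠ 0`.
-/

open Matrix Complex

noncomputable section

abbrev Q3 := Fin 2 × Fin 2 × Fin 2

def inner2 (u v : Fin 2 → ℂ) : ℂ := ∑ i, star (u i) * v i

def tens3 (a b c : Fin 2 → ℂ) : Q3 → ℂ := fun p => a p.1 * b p.2.1 * c p.2.2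

def kron3 (A B C : Matrix (Fin 2) (Fin 2) ℂ) : Matrix Q3 Q3 ℂ :=
  Matrix.of fun p q => A p.1 q.1 * B p.2.1 q.2.1 * C p.2.2 q.2.2

/-- The three-qubit W state `(|100⟩+|010⟩+|001⟩)/√3`. -/
def w3 : Q3 → ℂ := fun p =>
  ((Real.sqrt 3 : ℝ) : ℂ)⁻¹ *
    ((if p = (1, 0, 0) then 1 else 0) + (if p = (0, 1, 0) then 1 else 0) +
      (if p = (0, 0, 1) then 1 else 0))

open scoped Kronecker

theorem trace_unitary_conj {R ι : Type*} [CommRing R] [StarRing R] [Fintype ι] [DecidableEq ι]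
    {A : Matrix ι ι R} (hA : A ∈ unitaryGroup ι R) (N : Matrix ι ι R) :
    trace (A * N * Aᴴ) = trace N := by
  rw [trace_mul_cycle, ← star_eq_conjTranspose, hA.1, Matrix.one_mul]

section ReducedDensity

variable {R ι κ : Type*} [CommRing R] [StarRing R] [Fintype κ]

def reducedDensityFst (ψ : ι × κ → R) : Matrix ι ι R :=
  Matrix.of (Function.curry ψ) * (Matrix.of (Function.curry ψ))ᴴ

theorem reducedDensityFst_kronecker_mulVec [Fintype ι] [DecidableEq κ]
    {U : Matrix κ κ R} (hU : U ∈ unitaryGroup κ R) (A : Matrix ι ι R) (ψ : ι × κ → R) :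
    reducedDensityFst ((A ⊗ₖ U) *ᵥ ψ) = A * reducedDensityFst ψ * Aᴴ := by
  set M := Matrix.of (Function.curry ψ)
  have hUt : Uᵀ * (Uᵀ)ᴴ = 1 := (transpose_mem_unitaryGroup_iff.2 hU).2
  have hM : Matrix.of (Function.curry ((A ⊗ₖ U) *ᵥ ψ)) = A * M * Uᵀ := by
    have hψ : ψ = vec Mᵀ := rfl
    have hT : U * Mᵀ * Aᵀ = (A * M * Uᵀ)ᵀ := by
      simp only [transpose_mul, transpose_transpose, Matrix.mul_assoc]
    rw [hψ, kronecker_mulVec_vec, hT]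
    rfl
  rw [reducedDensityFst, hM, reducedDensityFst]
  simp only [conjTranspose_mul, Matrix.mul_assoc]
  rw [← Matrix.mul_assoc Uᵀ, hUt, Matrix.one_mul]

theorem reducedDensityFst_smul (z : R) (ψ : ι × κ → R) :
    reducedDensityFst (z • ψ) = (z * star z) • reducedDensityFst ψ := by
  have : Matrix.of (Function.curry (z • ψ)) = z • Matrix.of (Function.curry ψ) := rfl
  rw [reducedDensityFst, this, conjTranspose_smul, Matrix.smul_mul, Matrix.mul_smul, smul_smul,
    reducedDensityFst]

end ReducedDensity

section PurityDefect

variable {R ι κ : Type*} [CommRing R] [StarRing R] [Fintype ι] [Fintype κ]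

def purityDefect (ψ : ι × κ → R) : R :=
  9 * trace (reducedDensityFst ψ * reducedDensityFst ψ) - 5 * trace (reducedDensityFst ψ) ^ 2

theorem purityDefect_kronecker_mulVec [DecidableEq ι] [DecidableEq κ] {A : Matrix ι ι R}
    {U : Matrix κ κ R} (hA : A ∈ unitaryGroup ι R) (hU : U ∈ unitaryGroup κ R)
    (ψ : ι × κ → R) :
    purityDefect ((A ⊗ₖ U) *ᵥ ψ) = purityDefect ψ := by
  set ρ := reducedDensityFst ψ
  have hsq : A * ρ * Aᴴ * (A * ρ * Aᴴ) = A * (ρ * ρ) * Aᴴ := by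
    simp only [Matrix.mul_assoc]
    rw [← Matrix.mul_assoc Aᴴ A, ← star_eq_conjTranspose, hA.1, Matrix.one_mul]
  rw [purityDefect, reducedDensityFst_kronecker_mulVec hU, hsq, trace_unitary_conj hA,
    trace_unitary_conj hA, purityDefect]

theorem purityDefect_smul (z : R) (ψ : ι × κ → R) :
    purityDefect (z • ψ) = (z * star z) ^ 2 * purityDefect ψ := by
  rw [purityDefect, reducedDensityFst_smul, smul_mul_smul_comm, trace_smul, trace_smul,
    purityDefect, smul_eq_mul, smul_eq_mul]
  ring

end PurityDefect

theorem reducedDensityFst_w3 : reducedDensityFst w3 = !![2 / 3, 0; 0, 1 / 3] := by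
  have h3 : ((Real.sqrt 3 : ℝ) : ℂ)⁻¹ * ((Real.sqrt 3 : ℝ) : ℂ)⁻¹ = 3⁻¹ := by
    rw [← mul_inv, ← Complex.ofReal_mul, Real.mul_self_sqrt (by norm_num)]
    norm_num
  ext i j
  fin_cases i <;> fin_cases j <;>
    norm_num [reducedDensityFst, w3, Matrix.mul_apply, Fintype.sum_prod_type, h3]

theorem purityDefect_w3 : purityDefect w3 = 0 := by
  rw [purityDefect, reducedDensityFst_w3]
  norm_num [trace_fin_two]

theorem purityDefect_symm_tens3 (a b : Fin 2 → ℂ) :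
    purityDefect (tens3 b a a + tens3 a b a + tens3 a a b) =
      216 * (inner2 a b * star (inner2 a b)) * inner2 a a ^ 3 * inner2 b b +
        108 * (inner2 a b * star (inner2 a b)) ^ 2 * inner2 a a ^ 2 := by
  simp only [purityDefect, reducedDensityFst, tens3, inner2, Matrix.trace_fin_two,
    Matrix.mul_apply, conjTranspose_apply, of_apply, Function.curry_apply, Pi.add_apply,
    Fintype.sum_prod_type, Fin.sum_univ_two, star_add, star_mul', star_star]
  ring

theorem purityDefect_symm_tens3_ne_zero {a b : Fin 2 → ℂ} (ha : inner2 a a = 1)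
    (hb : inner2 b b = 1) (hab : inner2 a b ≠ 0) :
    purityDefect (tens3 b a a + tens3 a b a + tens3 a a b) ≠ 0 := by
  have hs : 0 < Complex.normSq (inner2 a b) := Complex.normSq_pos.2 hab
  rw [purityDefect_symm_tens3, ha, hb, Complex.star_def, Complex.mul_conj]
  norm_cast
  positivity

theorem kron3_eq_kronecker (A B C : Matrix (Fin 2) (Fin 2) ℂ) :
    kron3 A B C = A ⊗ₖ (B ⊗ₖ C) := by
  ext p q
  simp [kron3, mul_assoc]

theorem not_LU_equivalent_W_general
    (a b : Fin 2 → ℂ)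
    (ha : inner2 a a = 1) (hb : inner2 b b = 1)
    (hnotorth : ‖inner2 a b‖ ≠ 0) :
    let v := tens3 b a a + tens3 a b a + tens3 a a b
    ¬ ∃ W₀ W₁ W₂ : Matrix (Fin 2) (Fin 2) ℂ,
        W₀ ∈ Matrix.unitaryGroup (Fin 2) ℂ ∧ W₁ ∈ Matrix.unitaryGroup (Fin 2) ℂ ∧
        W₂ ∈ Matrix.unitaryGroup (Fin 2) ℂ ∧
        ((Real.sqrt (∑ p, Complex.normSq (v p)) : ℝ) : ℂ)⁻¹ • v =
          (kron3 W₀ W₁ W₂).mulVec w3 := by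
  intro v ⟨W₀, W₁, W₂, h0, h1, h2, heq⟩
  set z : ℂ := ((Real.sqrt (∑ p, Complex.normSq (v p)) : ℝ) : ℂ)⁻¹
  have h12 : W₁ ⊗ₖ W₂ ∈ unitaryGroup (Fin 2 × Fin 2) ℂ := kronecker_mem_unitary h1 h2
  rw [kron3_eq_kronecker] at heq
  have hz : z * star z ≠ 0 := by
    intro hz
    have htr := congrArg (fun ψ => trace (reducedDensityFst ψ)) heq
    simp only [reducedDensityFst_smul, trace_smul, smul_eq_mul, hz, zero_mul,
      reducedDensityFst_kronecker_mulVec h12, trace_unitary_conj h0, reducedDensityFst_w3] at htr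
    norm_num [trace_fin_two] at htr
  have hdef := congrArg purityDefect heq
  rw [purityDefect_smul, purityDefect_kronecker_mulVec h0 h12, purityDefect_w3] at hdef
  exact purityDefect_symm_tens3_ne_zero ha hb (norm_ne_zero_iff.1 hnotorth)
    ((mul_eq_zero.1 hdef).resolve_left (pow_ne_zero 2 hz))

/-- for unit vectors `a, b ∈ ℂ²` with `0 < |⟨a|b⟩| < 1` (neither orthogonal
nor parallel), the normalized vector `∝ b⊗a⊗a + a⊗b⊗a + a⊗a⊗b` is NOT local-unitarily
equivalent to the W state. -/
theorem not_LU_equivalent_W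
    (a b : Fin 2 → ℂ)
    (ha : inner2 a a = 1) (hb : inner2 b b = 1)
    (hnotorth : ‖inner2 a b‖ ≠ 0)
    (hnotpar : ‖inner2 a b‖ ≠ 1) :
    let v := tens3 b a a + tens3 a b a + tens3 a a b
    ¬ ∃ W₀ W₁ W₂ : Matrix (Fin 2) (Fin 2) ℂ,
        W₀ ∈ Matrix.unitaryGroup (Fin 2) ℂ ∧ W₁ ∈ Matrix.unitaryGroup (Fin 2) ℂ ∧
        W₂ ∈ Matrix.unitaryGroup (Fin 2) ℂ ∧
        ((Real.sqrt (∑ p, Complex.normSq (v p)) : ℝ) : ℂ)⁻¹ • v =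
          (kron3 W₀ W₁ W₂).mulVec w3 :=
  not_LU_equivalent_W_general a b ha hb hnotorth
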